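/- Let n ≥ 2 and let v_1,…,v_n and w_1,…,w_n be orthonormal families in ℝ^n. Then Σ_{σ,γ ∈ S_n} sgn(σ) sgn(γ) · ( Π_{t=1}^n ⟨v_{σ(t)}, w_{γ(t)}⟩ ) · ( Π_{t=1}^n ⟨v_{σ(t)}, w_{γ(t+1)}⟩ ) = 0, where ⟨·,·⟩ is the standard inner product on ℝ^n and in the second product γ(t+1) is read cyclically, so the factor for t = n is ⟨v_{σ(n)}, w_{γ(1)}⟩. -/
import Mathlib


open Finset

/-- For any `n ≥ 2` and orthonormal families `v` and `w` in `ℝ^n`,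
`∑ σ γ, sgn σ * sgn γ * (∏ t, ⟨v (σ t), w (γ t)⟩) * (∏ t, ⟨v (σ t), w (γ (t+1))⟩) = 0`,
where `⟨·,·⟩` is the standard inner product and `t + 1` is read cyclically in `Fin n`
(so the factor for the last `t` is `⟨v (σ (n-1)), w (γ 0)⟩`). -/
theorem orthonormal_cancellation
    (n : ℕ) (hn : 2 ≤ n) (v w : Fin n → Fin n → ℝ)
    (hv : ∀ i j, (∑ k, v i k * v j k) = if i = j then 1 else 0)
    (hw : ∀ i j, (∑ k, w i k * w j k) = if i = j then 1 else 0) :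
    ∑ σ : Equiv.Perm (Fin n), ∑ γ : Equiv.Perm (Fin n),
      ((Equiv.Perm.sign σ : ℤ) : ℝ) * ((Equiv.Perm.sign γ : ℤ) : ℝ) *
        (∏ t : Fin n, ∑ m, v (σ t) m * w (γ t) m) *
        (∏ t : Fin n, ∑ m, v (σ t) m * w (γ (t + ⟨1, by omega⟩)) m) = 0 := by
  have hn0 : 0 < n := by omega
  -- Columns of `v` are orthonormal too (right inverse implies left inverse).
  have hvtv : ∀ m l : Fin n, (∑ i, v i m * v i l) = if m = l then 1 else 0 := by
    have h1 : (Matrix.of v) * Matrix.transpose (Matrix.of v) = 1 := by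
      ext i j
      simpa [Matrix.mul_apply, Matrix.one_apply, Matrix.transpose] using hv i j
    have h2 : Matrix.transpose (Matrix.of v) * (Matrix.of v) = 1 :=
      mul_eq_one_comm.mp h1
    intro m l
    have := congrFun (congrFun h2 m) l
    simpa [Matrix.mul_apply, Matrix.one_apply] using this
  -- Parseval: the Gram matrix of the vectors `⟨v_·, w_j⟩` is the identity.
  have key : ∀ j k : Fin n,
      (∑ i, (∑ m, v i m * w j m) * (∑ m, v i m * w k m)) = if j = k then 1 else 0 := by
    intro j k
    calc ∑ i, (∑ m, v i m * w j m) * (∑ m, v i m * w k m)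
        = ∑ i, ∑ m, ∑ l, (v i m * w j m) * (v i l * w k l) := by
          refine Finset.sum_congr rfl fun i _ => ?_
          rw [Finset.sum_mul_sum]
      _ = ∑ m, ∑ l, ∑ i, (v i m * w j m) * (v i l * w k l) := by
          rw [Finset.sum_comm]
          exact Finset.sum_congr rfl fun m _ => Finset.sum_comm
      _ = ∑ m, ∑ l, (w j m * w k l) * ∑ i, v i m * v i l := by
          refine Finset.sum_congr rfl fun m _ => Finset.sum_congr rfl fun l _ => ?_
          rw [Finset.mul_sum]
          exact Finset.sum_congr rfl fun i _ => by ring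
      _ = ∑ m, w j m * w k m := by
          refine Finset.sum_congr rfl fun m _ => ?_
          simp only [hvtv]
          simp [mul_ite, mul_one, mul_zero]
      _ = if j = k then 1 else 0 := hw j k
  rw [Finset.sum_comm]
  refine Finset.sum_eq_zero fun γ _ => ?_
  -- For a fixed `γ`, the inner sum is `sign γ` times the determinant of `M`,
  -- whose columns each sum to `⟨w (γ t), w (γ (t+1))⟩ = 0`.
  set M : Matrix (Fin n) (Fin n) ℝ :=
    fun i t => (∑ m, v i m * w (γ t) m) * (∑ m, v i m * w (γ (t + ⟨1, by omega⟩)) m) with hM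
  have hdet : M.det = 0 := by
    rw [← Matrix.exists_vecMul_eq_zero_iff]
    refine ⟨fun _ => (1 : ℝ), ?_, ?_⟩
    · intro h
      exact one_ne_zero (congrFun h ⟨0, hn0⟩)
    · funext t
      have hne : γ t ≠ γ (t + ⟨1, by omega⟩) := by
        intro h
        have ht : t = t + ⟨1, by omega⟩ := γ.injective h
        have hval := congrArg Fin.val ht
        rw [Fin.add_def] at hval
        simp only [Fin.val_mk] at hval
        have htv : (t : ℕ) < n := t.isLt
        rcases Nat.lt_or_ge ((t : ℕ) + 1) n with hlt | hge
        · rw [Nat.mod_eq_of_lt hlt] at hval; omega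
        · have heq : (t : ℕ) + 1 = n := by omega
          rw [heq, Nat.mod_self] at hval
          omega
      have hz : (∑ i, (∑ m, v i m * w (γ t) m) * (∑ m, v i m * w (γ (t + ⟨1, by omega⟩)) m)) = 0 := by
        rw [key, if_neg hne]
      simpa [Matrix.vecMul, dotProduct, hM] using hz
  calc ∑ σ : Equiv.Perm (Fin n),
      ((Equiv.Perm.sign σ : ℤ) : ℝ) * ((Equiv.Perm.sign γ : ℤ) : ℝ) *
        (∏ t : Fin n, ∑ m, v (σ t) m * w (γ t) m) *
        (∏ t : Fin n, ∑ m, v (σ t) m * w (γ (t + ⟨1, by omega⟩)) m)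
      = ((Equiv.Perm.sign γ : ℤ) : ℝ) *
          ∑ σ : Equiv.Perm (Fin n), ((Equiv.Perm.sign σ : ℤ) : ℝ) * ∏ t, M (σ t) t := by
        rw [Finset.mul_sum]
        refine Finset.sum_congr rfl fun σ _ => ?_
        simp only [hM]
        rw [Finset.prod_mul_distrib]
        ring
    _ = ((Equiv.Perm.sign γ : ℤ) : ℝ) * M.det := by rw [Matrix.det_apply']
    _ = 0 := by rw [hdet, mul_zero]
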